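/- Antisymmetric state counterexample: let H = E_{i≠j} F_{i,j} be the average of swap operators over all ordered pairs of distinct indices among n systems, each of dimension d = n. Then the antisymmetric state ψ = (1/n!) Σ_{π∈S_n} sgn(π) |π(1)⟩⊗...⊗|π(n)⟩ satisfies ⟨ψ|H|ψ⟩ = −1, while every product state φ = φ_1 ⊗ ... ⊗ φ_n satisfies tr(Hφ) ≥ 0. -/

import Mathlib

open Finset
open scoped Classical BigOperators ComplexOrder

/-- Trace norm of a complex matrix: the trace of the positive square root of AᴴA. -/
noncomputable def traceNorm {n : Type*} [Fintype n] [DecidableEq n]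
    (A : Matrix n n ℂ) : ℝ :=
  (((Matrix.posSemidef_conjTranspose_mul_self A).1.eigenvectorUnitary.1 *
      Matrix.diagonal (((↑) : ℝ → ℂ) ∘ Real.sqrt ∘ (Matrix.posSemidef_conjTranspose_mul_self A).1.eigenvalues) *
      (star (Matrix.posSemidef_conjTranspose_mul_self A).1.eigenvectorUnitary : Matrix n n ℂ)).trace).re

/-- Tensor (Kronecker) product of k matrices of size d, acting on (C^d)^{⊗k},
whose index set is Fin k → Fin d. -/
noncomputable def piKron {k d : ℕ} (M : Fin k → Matrix (Fin d) (Fin d) ℂ) :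
    Matrix (Fin k → Fin d) (Fin k → Fin d) ℂ :=
  Matrix.of fun f g => ∏ i, M i (f i) (g i)

/-- The rank-one projector |v⟩⟨v| associated to a vector v in C^d. -/
noncomputable def vecProj {d : ℕ} (v : Fin d → ℂ) : Matrix (Fin d) (Fin d) ℂ :=
  Matrix.of fun i j => v i * star (v j)

/-- Von Neumann entropy (in nats) of a Hermitian matrix, via its eigenvalues. -/
noncomputable def vN {n : Type*} [Fintype n] [DecidableEq n] (A : Matrix n n ℂ) : ℝ :=
  if h : A.IsHermitian then -∑ i, h.eigenvalues i * Real.log (h.eigenvalues i) else 0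

/-- The swap operator F_{i,j} on (C^n)^{⊗n}, exchanging tensor factors i and j. -/
noncomputable def swapMat (n : ℕ) (i j : Fin n) :
    Matrix (Fin n → Fin n) (Fin n → Fin n) ℂ :=
  Matrix.of fun f g => if ∀ q, g q = f (Equiv.swap i j q) then 1 else 0

/-- The Hamiltonian H = E_{i≠j} F_{i,j}: the average of the swap operators over all
ordered pairs of distinct indices. -/
noncomputable def swapHam (n : ℕ) : Matrix (Fin n → Fin n) (Fin n → Fin n) ℂ :=
  ((n * (n - 1) : ℕ) : ℂ)⁻¹ •
    ∑ i : Fin n, ∑ j ∈ Finset.univ.filter (fun j => j ≠ i), swapMat n i j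

/-- The amplitudes of the antisymmetric state ψ = (1/√(n!)) Σ_π sgn(π) |π(1),...,π(n)⟩. -/
noncomputable def antisymVec (n : ℕ) : (Fin n → Fin n) → ℂ :=
  fun f =>
    if h : Function.Bijective f then
      (((Equiv.Perm.sign (Equiv.ofBijective f h) : ℤ) : ℂ) / ((Real.sqrt n.factorial : ℝ) : ℂ))
    else 0

/-!
Every swap `F_{i,j}` flips the sign of the antisymmetric state, so `ψ` is an eigenvector of
`H` with eigenvalue `-1`. On a product state, `tr(F_{i,j} (φ_1 ⊗ ⋯ ⊗ φ_n))` factors as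
`tr(φ_i φ_j) · ∏_{l ≠ i, j} tr φ_l`, and the trace of a product of two positive semidefinite
matrices is nonnegative.
-/

open Matrix

section Swap

variable {n : ℕ}

lemma swapMat_apply (i j : Fin n) (f g : Fin n → Fin n) :
    swapMat n i j f g = if g = f ∘ Equiv.swap i j then 1 else 0 := by
  simp only [swapMat, of_apply, funext_iff, Function.comp_apply]

lemma swapMat_mulVec_apply (i j : Fin n) (v : (Fin n → Fin n) → ℂ) (f : Fin n → Fin n) :
    (swapMat n i j *ᵥ v) f = v (f ∘ Equiv.swap i j) := by
  simp [mulVec, dotProduct, swapMat_apply]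

lemma trace_swapMat_mul (i j : Fin n) (A : Matrix (Fin n → Fin n) (Fin n → Fin n) ℂ) :
    (swapMat n i j * A).trace = ∑ f, A (f ∘ Equiv.swap i j) f := by
  simp [trace, mul_apply, swapMat_apply]

lemma swapHam_mulVec_eq_neg (hn : 2 ≤ n) {v : (Fin n → Fin n) → ℂ}
    (hv : ∀ i j, i ≠ j → ∀ f, v (f ∘ Equiv.swap i j) = -v f) :
    swapHam n *ᵥ v = -v := by
  have hc : ((n * (n - 1) : ℕ) : ℂ) ≠ 0 := by
    exact_mod_cast (Nat.mul_pos (by omega) (by omega)).ne'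
  ext f
  simp only [swapHam, smul_mulVec, sum_mulVec, Pi.smul_apply, Finset.sum_apply,
    swapMat_mulVec_apply, smul_eq_mul]
  rw [sum_congr rfl fun i _ => sum_congr rfl fun j hj =>
    hv i j (Ne.symm (mem_filter.mp hj).2) f]
  simp only [sum_const, filter_ne', card_erase_of_mem (mem_univ _), card_univ, Fintype.card_fin,
    nsmul_eq_mul, Pi.neg_apply]
  rw [← mul_assoc (n : ℂ), ← Nat.cast_mul, inv_mul_cancel_left₀ hc]

lemma trace_swapHam_mul (A : Matrix (Fin n → Fin n) (Fin n → Fin n) ℂ) :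
    (swapHam n * A).trace = ((n * (n - 1) : ℕ) : ℂ)⁻¹ *
      ∑ i, ∑ j ∈ univ.filter (fun j => j ≠ i), (swapMat n i j * A).trace := by
  simp only [swapHam, smul_mul, sum_mul, trace_smul, trace_sum, smul_eq_mul]

end Swap

lemma antisymVec_comp_swap {n : ℕ} {i j : Fin n} (hij : i ≠ j) (f : Fin n → Fin n) :
    antisymVec n (f ∘ Equiv.swap i j) = -antisymVec n f := by
  have hb := Function.Bijective.of_comp_iff f (Equiv.swap i j).bijective
  by_cases hf : Function.Bijective f
  · have he : Equiv.ofBijective _ (hb.mpr hf) = (Equiv.swap i j).trans (Equiv.ofBijective f hf) :=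
      Equiv.ext fun _ => rfl
    simp only [antisymVec, dif_pos hf, dif_pos (hb.mpr hf), he, Equiv.Perm.sign_trans,
      Equiv.Perm.sign_swap hij]
    push_cast
    ring
  · simp only [antisymVec, dif_neg hf, dif_neg (hb.not.mpr hf), neg_zero]

lemma star_antisymVec_mul_self {n : ℕ} (f : Fin n → Fin n) :
    star (antisymVec n f) * antisymVec n f =
      if Function.Bijective f then (n.factorial : ℂ)⁻¹ else 0 := by
  by_cases hf : Function.Bijective f
  · have hsign := congrArg (fun u : ℤˣ => ((u : ℤ) : ℂ))
      (Int.units_mul_self (Equiv.Perm.sign (Equiv.ofBijective f hf)))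
    have hsqrt : ((√n.factorial : ℝ) : ℂ) * ((√n.factorial : ℝ) : ℂ) = n.factorial := by
      rw [← Complex.ofReal_mul, Real.mul_self_sqrt (Nat.cast_nonneg _), Complex.ofReal_natCast]
    simp only [Units.val_mul, Int.cast_mul, Units.val_one, Int.cast_one] at hsign
    rw [antisymVec, dif_pos hf, if_pos hf, star_div₀, star_intCast, Complex.star_def,
      Complex.conj_ofReal, div_mul_div_comm, hsign, hsqrt, one_div]
  · simp only [antisymVec, dif_neg hf, if_neg hf, mul_zero]

lemma antisymVec_dotProduct_self (n : ℕ) :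
    star (antisymVec n) ⬝ᵥ antisymVec n = 1 := by
  have hcard : (univ.filter fun f : Fin n → Fin n => f.Bijective).card = n.factorial := by
    rw [← Fintype.card_subtype, Fintype.card_congr Equiv.bijectiveEquiv, Fintype.card_equiv
      (Equiv.refl _), Fintype.card_fin]
  simp only [dotProduct, Pi.star_apply, star_antisymVec_mul_self, sum_ite, sum_const_zero,
    add_zero, sum_const, hcard, nsmul_eq_mul]
  exact mul_inv_cancel₀ (Nat.cast_ne_zero.mpr n.factorial_ne_zero)

lemma sum_piKron_comp_swap {k d : ℕ} {i j : Fin k} (hij : i ≠ j)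
    (M : Fin k → Matrix (Fin d) (Fin d) ℂ) :
    ∑ f : Fin k → Fin d, piKron M (f ∘ Equiv.swap i j) f =
      (M i * M j).trace * ∏ l ∈ {i, j}ᶜ, (M l).trace := by
  have split (x : Fin k → ℂ) : ∏ l, x l = x i * x j * ∏ l ∈ {i, j}ᶜ, x l := by
    rw [← prod_mul_prod_compl {i, j}, prod_pair hij]
  have hcompl : ∀ l ∈ ({i, j}ᶜ : Finset (Fin k)), l ≠ i ∧ l ≠ j := fun l hl => by
    simpa only [mem_compl, mem_insert, mem_singleton, not_or] using hl
  -- Decouple the factors at `i` and `j` by summing over the value `b` of `f j`.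
  let u : Fin d → Fin k → Fin d → ℂ := fun b l c =>
    if l = i then M i b c * M j c b else if l = j then (if c = b then 1 else 0) else M l c c
  have hu_i : ∀ b c, u b i c = M i b c * M j c b := fun b c => if_pos rfl
  have hu_j : ∀ b c, u b j c = if c = b then 1 else 0 := fun b c => by simp [u, hij.symm]
  have hu_compl : ∀ b, ∀ l ∈ ({i, j}ᶜ : Finset (Fin k)), ∀ c, u b l c = M l c c :=
    fun b l hl c => by simp [u, (hcompl l hl).1, (hcompl l hl).2]
  have hdecouple : ∀ f : Fin k → Fin d,
      piKron M (f ∘ Equiv.swap i j) f = ∑ b, ∏ l, u b l (f l) := fun f => by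
    simp only [piKron, of_apply, Function.comp_apply, split, hu_i, hu_j, Equiv.swap_apply_left,
      Equiv.swap_apply_right]
    have hrest : ∀ b,
        ∏ l ∈ {i, j}ᶜ, u b l (f l) = ∏ l ∈ {i, j}ᶜ, M l (f (Equiv.swap i j l)) (f l) :=
      fun b => prod_congr rfl fun l hl => by
        rw [hu_compl b l hl, Equiv.swap_apply_of_ne_of_ne (hcompl l hl).1 (hcompl l hl).2]
    simp only [hrest, mul_ite, mul_one, mul_zero, ite_mul, zero_mul, sum_ite_eq, mem_univ,
      if_true]
  calc ∑ f : Fin k → Fin d, piKron M (f ∘ Equiv.swap i j) f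
      = ∑ b, ∏ l, ∑ c, u b l c := by
        simp only [hdecouple, Fintype.prod_sum]
        exact sum_comm
    _ = ∑ b, (∑ c, M i b c * M j c b) * ∏ l ∈ {i, j}ᶜ, (M l).trace := by
        refine sum_congr rfl fun b _ => ?_
        rw [split, prod_congr rfl fun l hl => sum_congr rfl fun c _ => hu_compl b l hl c]
        simp only [hu_i, hu_j, sum_ite_eq', mem_univ, if_true, mul_one]
        rfl
    _ = _ := by
        rw [← sum_mul]
        rfl

open scoped MatrixOrder in
lemma Matrix.PosSemidef.trace_mul_nonneg {m 𝕜 : Type*} [Fintype m] [DecidableEq m] [RCLike 𝕜]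
    {A B : Matrix m m 𝕜} (hA : A.PosSemidef) (hB : B.PosSemidef) : 0 ≤ (A * B).trace := by
  obtain ⟨S, rfl⟩ := CStarAlgebra.nonneg_iff_eq_star_mul_self.mp hA.nonneg
  rw [Matrix.mul_assoc, trace_mul_comm]
  exact (hB.mul_mul_conjTranspose_same S).trace_nonneg

lemma trace_swapHam_mul_piKron_nonneg {n : ℕ} {φ : Fin n → Matrix (Fin n) (Fin n) ℂ}
    (hφ : ∀ i, (φ i).PosSemidef) : 0 ≤ (swapHam n * piKron φ).trace := by
  rw [trace_swapHam_mul]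
  refine mul_nonneg (inv_nonneg.mpr (Nat.cast_nonneg _)) <| sum_nonneg fun i _ =>
    sum_nonneg fun j hj => ?_
  rw [trace_swapMat_mul, sum_piKron_comp_swap (Ne.symm (mem_filter.mp hj).2)]
  exact mul_nonneg ((hφ i).trace_mul_nonneg (hφ j)) (prod_nonneg fun l _ => (hφ l).trace_nonneg)

/-- Antisymmetric counterexample: for n systems of dimension d = n, the antisymmetric
state has energy ⟨ψ|H|ψ⟩ = −1 for H = E_{i≠j} F_{i,j}, while every product state
φ_1 ⊗ ... ⊗ φ_n has nonnegative energy. -/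
theorem antisymmetric_counterexample (n : ℕ) (hn : 2 ≤ n) :
    (∑ f : Fin n → Fin n, ∑ g : Fin n → Fin n,
        (starRingEnd ℂ) (antisymVec n f) * swapHam n f g * antisymVec n g) = -1 ∧
    ∀ φ : Fin n → Matrix (Fin n) (Fin n) ℂ,
      (∀ i, (φ i).PosSemidef) → (∀ i, (φ i).trace = 1) →
      0 ≤ ((swapHam n * piKron φ).trace).re := by
  refine ⟨?_, fun φ hφ _ => (Complex.nonneg_iff.mp (trace_swapHam_mul_piKron_nonneg hφ)).1⟩
  have heigen : swapHam n *ᵥ antisymVec n = -antisymVec n :=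
    swapHam_mulVec_eq_neg hn fun _ _ hij => antisymVec_comp_swap hij
  calc ∑ f, ∑ g, (starRingEnd ℂ) (antisymVec n f) * swapHam n f g * antisymVec n g
      = star (antisymVec n) ⬝ᵥ (swapHam n *ᵥ antisymVec n) := by
        simp only [dotProduct, mulVec, mul_sum, mul_assoc, Pi.star_apply, Complex.star_def]
    _ = -1 := by rw [heigen, dotProduct_neg, antisymVec_dotProduct_self]
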